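/- Let X be a left-continuous compact Hausdorff semigroup and let R be a minimal right ideal of X. Then R equals the union, over all minimal left ideals L of X, of the sets R ∩ L, each such intersection R ∩ L is an Ellis subgroup of L, and these intersections are pairwise disjoint for distinct minimal left ideals L; in particular, R is a disjoint union of Ellis subgroups. -/

import Mathlib

/-!
A minimal left ideal `L` equals `X * p` for each `p ∈ L`, so it is a closed subsemigroup and
contains an idempotent `e` by the Ellis–Numakura lemma. For `r ∈ R`, the inverse `e * y * e` of
`e * r * e` in the group `e * L` turns `u = r * e * y * e` into an idempotent of `R ∩ L`. As
`R = u * X`, the idempotent `u` is a left identity on `R`; hence `R ∩ L = u * L`, and every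
`r ∈ R` equals `u * r` and so lies in the minimal left ideal `L * r`.
-/

open Pointwise

variable {X : Type*}

/-- A left ideal of a semigroup: a nonempty subset `I` with `X * I ⊆ I`. -/
def IsLeftIdeal [Mul X] (I : Set X) : Prop :=
  I.Nonempty ∧ ∀ x : X, ∀ i ∈ I, x * i ∈ I

/-- A right ideal of a semigroup: a nonempty subset `R` with `R * X ⊆ R`. -/
def IsRightIdeal [Mul X] (R : Set X) : Prop :=
  R.Nonempty ∧ ∀ r ∈ R, ∀ x : X, r * x ∈ R

/-- A two-sided ideal of a semigroup. -/
def IsSemigroupIdeal [Mul X] (I : Set X) : Prop :=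
  IsLeftIdeal I ∧ IsRightIdeal I

/-- A minimal left ideal: a left ideal containing no proper left subideal. -/
def IsMinLeftIdeal [Mul X] (I : Set X) : Prop :=
  IsLeftIdeal I ∧ ∀ J ⊆ I, IsLeftIdeal J → J = I

/-- A minimal right ideal: a right ideal containing no proper right subideal. -/
def IsMinRightIdeal [Mul X] (R : Set X) : Prop :=
  IsRightIdeal R ∧ ∀ S ⊆ R, IsRightIdeal S → S = R

/-- A minimal two-sided ideal. -/
def IsMinSemigroupIdeal [Mul X] (I : Set X) : Prop :=
  IsSemigroupIdeal I ∧ ∀ J ⊆ I, IsSemigroupIdeal J → J = I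

section Algebra

variable [Semigroup X]

theorem isLeftIdeal_range_mul_right (a : X) : IsLeftIdeal (Set.range (· * a)) :=
  ⟨⟨a * a, a, rfl⟩, by rintro x _ ⟨y, rfl⟩; exact ⟨x * y, mul_assoc x y a⟩⟩

theorem isRightIdeal_range_mul_left (a : X) : IsRightIdeal (Set.range (a * ·)) :=
  ⟨⟨a * a, a, rfl⟩, by rintro _ ⟨y, rfl⟩ x; exact ⟨y * x, (mul_assoc a y x).symm⟩⟩

theorem IsMinLeftIdeal.range_mul_right_eq {L : Set X} (hL : IsMinLeftIdeal L) {a : X}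
    (ha : a ∈ L) : Set.range (· * a) = L :=
  hL.2 _ (by rintro _ ⟨x, rfl⟩; exact hL.1.2 x a ha) (isLeftIdeal_range_mul_right a)

theorem IsMinRightIdeal.range_mul_left_eq {R : Set X} (hR : IsMinRightIdeal R) {a : X}
    (ha : a ∈ R) : Set.range (a * ·) = R :=
  hR.2 _ (by rintro _ ⟨x, rfl⟩; exact hR.1.2 a ha x) (isRightIdeal_range_mul_left a)

theorem IsMinLeftIdeal.disjoint_of_ne {L L' : Set X} (hL : IsMinLeftIdeal L)
    (hL' : IsMinLeftIdeal L') (hne : L ≠ L') : Disjoint L L' := by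
  refine Set.disjoint_left.2 fun a haL haL' => hne ?_
  rw [← hL.range_mul_right_eq haL, ← hL'.range_mul_right_eq haL']

theorem IsMinRightIdeal.idempotent_mul_eq {R : Set X} (hR : IsMinRightIdeal R) {u a : X}
    (hu : u ∈ R) (huu : u * u = u) (ha : a ∈ R) : u * a = a := by
  obtain ⟨y, rfl⟩ : a ∈ Set.range (u * ·) := (hR.range_mul_left_eq hu).symm ▸ ha
  rw [← mul_assoc, huu]

theorem IsMinLeftIdeal.image_mul_right {L : Set X} (hL : IsMinLeftIdeal L) (r : X) :
    IsMinLeftIdeal ((· * r) '' L) := by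
  obtain ⟨l, hl⟩ := hL.1.1
  refine ⟨⟨⟨l * r, l, hl, rfl⟩, ?_⟩, fun J hJ hJideal => ?_⟩
  · rintro x _ ⟨y, hy, rfl⟩
    exact ⟨x * y, hL.1.2 x y hy, mul_assoc x y r⟩
  -- The elements of `L` that `(· * r)` sends into `J` form a left ideal, hence all of `L`.
  have hpre : L ∩ (· * r) ⁻¹' J = L := by
    refine hL.2 _ Set.inter_subset_left ⟨?_, ?_⟩
    · obtain ⟨j, hj⟩ := hJideal.1
      obtain ⟨y, hy, rfl⟩ := hJ hj
      exact ⟨y, hy, hj⟩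
    · rintro x y ⟨hy, hyJ⟩
      refine ⟨hL.1.2 x y hy, ?_⟩
      simpa only [Set.mem_preimage, mul_assoc] using hJideal.2 x _ hyJ
  refine hJ.antisymm ?_
  rintro _ ⟨y, hy, rfl⟩
  exact (hpre.superset hy).2

theorem IsMinLeftIdeal.exists_idempotent_mem_inter {R L : Set X} (hR : IsRightIdeal R)
    (hL : IsMinLeftIdeal L) {e : X} (he : e ∈ L) (hee : e * e = e) :
    ∃ u ∈ R ∩ L, u * u = u := by
  obtain ⟨r, hr⟩ := hR.1
  obtain ⟨y, hy⟩ : e ∈ Set.range (· * (e * r * e)) :=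
    (hL.range_mul_right_eq (hL.1.2 _ e he)).symm ▸ he
  refine ⟨r * e * y * e, ⟨hR.2 _ (hR.2 _ (hR.2 r hr e) y) e, hL.1.2 _ e he⟩, ?_⟩
  calc r * e * y * e * (r * e * y * e)
      = r * e * (y * (e * r * e)) * y * e := by simp only [mul_assoc]
    _ = r * e * y * e := by simp only at hy; rw [hy, mul_assoc r e e, hee]

theorem IsMinRightIdeal.inter_eq_singleton_mul {R L : Set X} (hR : IsMinRightIdeal R)
    (hL : IsLeftIdeal L) {u : X} (huR : u ∈ R) (huu : u * u = u) :
    R ∩ L = {u} * L := by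
  ext a
  rw [Set.singleton_mul]
  constructor
  · rintro ⟨haR, haL⟩
    exact ⟨a, haL, hR.idempotent_mul_eq huR huu haR⟩
  · rintro ⟨l, hl, rfl⟩
    exact ⟨hR.1.2 u huR l, hL.2 u l hl⟩

end Algebra

section Topology

variable [Semigroup X] [TopologicalSpace X] [CompactSpace X] [T2Space X]

theorem isClosed_range_mul_right (hX : ∀ a : X, Continuous fun x : X => x * a) (a : X) :
    IsClosed (Set.range (· * a)) :=
  (isCompact_range (hX a)).isClosed

theorem IsMinLeftIdeal.isClosed (hX : ∀ a : X, Continuous fun x : X => x * a) {L : Set X}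
    (hL : IsMinLeftIdeal L) : IsClosed L := by
  obtain ⟨a, ha⟩ := hL.1.1
  exact hL.range_mul_right_eq ha ▸ isClosed_range_mul_right hX a

theorem IsMinLeftIdeal.exists_idempotent (hX : ∀ a : X, Continuous fun x : X => x * a)
    {L : Set X} (hL : IsMinLeftIdeal L) : ∃ e ∈ L, e * e = e :=
  exists_idempotent_in_compact_subsemigroup hX L hL.1.1 (hL.isClosed hX).isCompact
    fun x _ y hy => hL.1.2 x y hy

theorem IsLeftIdeal.exists_isMinLeftIdeal_subset (hX : ∀ a : X, Continuous fun x : X => x * a)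
    {I : Set X} (hI : IsLeftIdeal I) : ∃ L ⊆ I, IsMinLeftIdeal L := by
  set S := {J : Set X | IsClosed J ∧ IsLeftIdeal J}
  have hchain : ∀ c ⊆ S, IsChain (· ⊆ ·) c → c.Nonempty → ∃ lb ∈ S, ∀ s ∈ c, lb ⊆ s := by
    intro c hcS hc hcne
    have : Nonempty c := hcne.coe_sort
    have hne : (⋂₀ c).Nonempty :=
      IsCompact.nonempty_sInter_of_directed_nonempty_isCompact_isClosed
        (IsChain.directedOn hc.symm)
        (fun J hJ => (hcS hJ).2.1) (fun J hJ => (hcS hJ).1.isCompact) fun J hJ => (hcS hJ).1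
    refine ⟨⋂₀ c, ⟨isClosed_sInter fun J hJ => (hcS hJ).1, hne, fun x i hi => ?_⟩,
      fun _ => Set.sInter_subset_of_mem⟩
    exact Set.mem_sInter.2 fun J hJ => (hcS hJ).2.2 x i (Set.mem_sInter.1 hi J hJ)
  obtain ⟨a, ha⟩ := hI.1
  obtain ⟨M, hMa, hM⟩ := zorn_superset_nonempty S hchain _
    ⟨isClosed_range_mul_right hX a, isLeftIdeal_range_mul_right a⟩
  refine ⟨M, ?_, hM.prop.2, fun J hJM hJ => hJM.antisymm ?_⟩
  · rintro _ hm
    obtain ⟨x, rfl⟩ := hMa hm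
    exact hI.2 x a ha
  obtain ⟨j, hj⟩ := hJ.1
  have hjJ : Set.range (· * j) ⊆ J := by rintro _ ⟨x, rfl⟩; exact hJ.2 x j hj
  exact (hM.2 ⟨isClosed_range_mul_right hX j, isLeftIdeal_range_mul_right j⟩
    (hjJ.trans hJM)).trans hjJ

theorem IsMinRightIdeal.exists_isMinLeftIdeal_mem (hX : ∀ a : X, Continuous fun x : X => x * a)
    {R : Set X} (hR : IsMinRightIdeal R) {r : X} (hr : r ∈ R) :
    ∃ L, IsMinLeftIdeal L ∧ r ∈ L := by
  obtain ⟨L, -, hL⟩ := (show IsLeftIdeal (Set.univ : Set X) from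
    ⟨⟨r, trivial⟩, fun _ _ _ => trivial⟩).exists_isMinLeftIdeal_subset hX
  obtain ⟨e, he, hee⟩ := hL.exists_idempotent hX
  obtain ⟨u, ⟨huR, huL⟩, huu⟩ := hL.exists_idempotent_mem_inter hR.1 he hee
  exact ⟨_, hL.image_mul_right r, u, huL, hR.idempotent_mul_eq huR huu hr⟩

end Topology

/-- A minimal right ideal `R` is the disjoint union, over all minimal left ideals `L`,
of the Ellis subgroups `R ∩ L`. -/
theorem stmt10 [Semigroup X] [TopologicalSpace X] [CompactSpace X] [T2Space X]
    (hX : ∀ a : X, Continuous fun x : X => x * a)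
    (R : Set X) (hR : IsMinRightIdeal R) :
    (R = ⋃ L ∈ {L : Set X | IsMinLeftIdeal L}, R ∩ L) ∧
    (∀ L : Set X, IsMinLeftIdeal L → ∃ u ∈ L, u * u = u ∧ R ∩ L = {u} * L) ∧
    (∀ L L' : Set X, IsMinLeftIdeal L → IsMinLeftIdeal L' → L ≠ L' →
      Disjoint (R ∩ L) (R ∩ L')) := by
  refine ⟨?_, fun L hL => ?_, fun L L' hL hL' hne => ?_⟩
  · refine (Set.iUnion₂_subset fun L _ => Set.inter_subset_left).antisymm' fun r hr => ?_
    obtain ⟨L, hL, hrL⟩ := hR.exists_isMinLeftIdeal_mem hX hr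
    exact Set.mem_biUnion hL ⟨hr, hrL⟩
  · obtain ⟨e, he, hee⟩ := hL.exists_idempotent hX
    obtain ⟨u, ⟨huR, huL⟩, huu⟩ := hL.exists_idempotent_mem_inter hR.1 he hee
    exact ⟨u, huL, huu, hR.inter_eq_singleton_mul hL.1 huR huu⟩
  · exact (hL.disjoint_of_ne hL' hne).mono Set.inter_subset_right Set.inter_subset_right
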